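/- Let 0 ≤ a < b ≤ 1 and define c(x,t) := (2/π) Σ_{n=1}^{∞} (1/n)(cos(nπa) − cos(nπb)) sin(nπx) exp(−n²π²t). Then for every t > 0 the series converges absolutely for all x ∈ ℝ, and the function c satisfies the one-dimensional heat equation ∂c/∂t − ∂²c/∂x² = 0 at every point (x,t) with x ∈ (0,1) and t > 0, together with the homogeneous Dirichlet boundary conditions c(0,t) = c(1,t) = 0 for every t > 0. -/

import Mathlib

open Set

/-- The `n`-th term (`n ≥ 1`) of the series solution of the 1D heat problem with
non-uniform initial condition (initial data `1` on `[a,b]`, `0` otherwise). -/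
noncomputable def heatTerm1D (a b : ℝ) (n : ℕ) (x t : ℝ) : ℝ :=
  (1 / (n : ℝ)) * (Real.cos ((n : ℝ) * Real.pi * a) - Real.cos ((n : ℝ) * Real.pi * b)) *
    Real.sin ((n : ℝ) * Real.pi * x) * Real.exp (-(n : ℝ) ^ 2 * Real.pi ^ 2 * t)

/-- The series solution
`c(x,t) = (2/π) Σ_{n=1}^∞ (1/n)(cos(nπa) − cos(nπb)) sin(nπx) exp(−n²π²t)`. -/
noncomputable def heatSol1D (a b : ℝ) (x t : ℝ) : ℝ :=
  (2 / Real.pi) * ∑' n : ℕ, heatTerm1D a b (n + 1) x t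

open Real

/-!
Each term `sin (k x) * exp (-k² t)` with `k = (n + 1)π` is a separated solution of the heat
equation vanishing at `x = 0` and `x = 1`, and the coefficients of the series are bounded. For
`t > 0` the factor `exp (-k² t)` beats every power `k ^ j` produced by differentiating in `x` or
`t`, so the differentiated series are dominated by summable sequences and the series may be
differentiated term by term.
-/

/-- Wave number of the Dirichlet eigenmode `sin ((n + 1)πx)` of `(0,1)`, indexed from `0`. -/
noncomputable def waveNum (n : ℕ) : ℝ := (n + 1) * π

noncomputable def modeSeries (f : ℝ → ℝ) (B : ℕ → ℝ) (x t : ℝ) : ℝ :=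
  ∑' n, B n * (f (waveNum n * x) * exp (-waveNum n ^ 2 * t))

lemma waveNum_pos (n : ℕ) : 0 < waveNum n := by
  unfold waveNum; positivity

lemma summable_waveNum_pow_mul_exp (j : ℕ) {t : ℝ} (ht : 0 < t) :
    Summable fun n => waveNum n ^ j * exp (-waveNum n ^ 2 * t) := by
  have hgeom : Summable fun n : ℕ => π ^ j * (((n + 1 : ℕ) : ℝ) ^ j *
      exp (-(π ^ 2 * t) * ((n + 1 : ℕ) : ℝ))) :=
    ((summable_nat_add_iff 1).2
      (summable_pow_mul_exp_neg_nat_mul j (mul_pos (pow_pos pi_pos 2) ht))).mul_left _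
  refine hgeom.of_nonneg_of_le
    (fun n => mul_nonneg (pow_nonneg (waveNum_pos n).le _) (exp_pos _).le) fun n => ?_
  have hn : (1 : ℝ) ≤ n + 1 := by simp
  calc waveNum n ^ j * exp (-waveNum n ^ 2 * t)
      = π ^ j * ((n + 1) ^ j * exp (-(π ^ 2 * t) * ((n + 1) * (n + 1)))) := by
        rw [waveNum, mul_pow]; ring_nf
    _ ≤ π ^ j * ((n + 1) ^ j * exp (-(π ^ 2 * t) * (n + 1))) := by
        gcongr π ^ j * (_ * ?_)
        exact exp_le_exp.2 (mul_le_mul_of_nonpos_left (le_mul_of_one_le_left (by positivity) hn)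
          (neg_nonpos.2 (mul_pos (pow_pos pi_pos 2) ht).le))
    _ = _ := by push_cast; ring

section

variable {f : ℝ → ℝ} {B : ℕ → ℝ} {M : ℝ} {j : ℕ}

lemma abs_waveNum_pow_mul_le (hB : ∀ n, |B n| ≤ M * waveNum n ^ j) (i n : ℕ) :
    |waveNum n ^ i * B n| ≤ M * waveNum n ^ (j + i) := by
  rw [abs_mul, abs_of_pos (pow_pos (waveNum_pos n) i), pow_add]
  nlinarith [hB n, pow_pos (waveNum_pos n) i]

lemma abs_waveNum_mul_le (hB : ∀ n, |B n| ≤ M * waveNum n ^ j) (n : ℕ) :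
    |waveNum n * B n| ≤ M * waveNum n ^ (j + 1) := by
  simpa only [pow_one] using abs_waveNum_pow_mul_le hB 1 n

lemma abs_mul_mode_le (hf : ∀ y, |f y| ≤ 1) (hB : ∀ n, |B n| ≤ M * waveNum n ^ j) (n : ℕ)
    (x t : ℝ) :
    |B n * (f (waveNum n * x) * exp (-waveNum n ^ 2 * t))| ≤
      M * waveNum n ^ j * exp (-waveNum n ^ 2 * t) := by
  rw [abs_mul, abs_mul, abs_exp]
  gcongr
  · exact (abs_nonneg _).trans (hB n)
  · exact hB n
  · exact mul_le_of_le_one_left (exp_pos _).le (hf _)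

lemma summable_abs_modeSeries (hf : ∀ y, |f y| ≤ 1) (hB : ∀ n, |B n| ≤ M * waveNum n ^ j)
    {t : ℝ} (ht : 0 < t) (x : ℝ) :
    Summable fun n => |B n * (f (waveNum n * x) * exp (-waveNum n ^ 2 * t))| := by
  refine .of_nonneg_of_le (fun n => abs_nonneg _) (abs_mul_mode_le hf hB · x t) ?_
  simpa only [mul_assoc] using (summable_waveNum_pow_mul_exp j ht).mul_left M

lemma hasDerivAt_modeSeries_time (hf : ∀ y, |f y| ≤ 1) (hB : ∀ n, |B n| ≤ M * waveNum n ^ j)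
    {t : ℝ} (ht : 0 < t) (x : ℝ) :
    HasDerivAt (fun s => modeSeries f B x s)
      (modeSeries f (fun n => -(waveNum n ^ 2 * B n)) x t) t := by
  have hB' n : |-(waveNum n ^ 2 * B n)| ≤ M * waveNum n ^ (j + 2) := by
    rw [abs_neg]; exact abs_waveNum_pow_mul_le hB 2 n
  have hderiv n s : HasDerivAt (fun s => B n * (f (waveNum n * x) * exp (-waveNum n ^ 2 * s)))
      (-(waveNum n ^ 2 * B n) * (f (waveNum n * x) * exp (-waveNum n ^ 2 * s))) s :=
    ((((hasDerivAt_id' s).const_mul (-waveNum n ^ 2)).exp.const_mul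
      (f (waveNum n * x))).const_mul (B n)).congr_deriv (by ring)
  -- the bound `exp (-k² s) ≤ exp (-k² t / 2)` is only uniform on `t / 2 < s`
  have hbound n s (hs : s ∈ Ioi (t / 2)) :
      ‖-(waveNum n ^ 2 * B n) * (f (waveNum n * x) * exp (-waveNum n ^ 2 * s))‖ ≤
        M * waveNum n ^ (j + 2) * exp (-waveNum n ^ 2 * (t / 2)) := by
    refine (abs_mul_mode_le hf hB' n x s).trans ?_
    gcongr _ * ?_
    · exact (abs_nonneg _).trans (hB' n)
    · exact exp_le_exp.2 (mul_le_mul_of_nonpos_left (le_of_lt hs)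
        (neg_nonpos.2 (pow_nonneg (waveNum_pos n).le 2)))
  have hsum : Summable fun n => M * waveNum n ^ (j + 2) * exp (-waveNum n ^ 2 * (t / 2)) := by
    simpa only [mul_assoc] using (summable_waveNum_pow_mul_exp (j + 2) (half_pos ht)).mul_left M
  have ht' : t ∈ Ioi (t / 2) := half_lt_self ht
  exact hasDerivAt_tsum_of_isPreconnected hsum isOpen_Ioi isPreconnected_Ioi
    (fun n s _ => hderiv n s) hbound ht' (summable_abs_modeSeries hf hB ht x).of_abs ht'

lemma hasDerivAt_modeSeries_space {f' : ℝ → ℝ} (hderiv : ∀ y, HasDerivAt f (f' y) y)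
    (hf : ∀ y, |f y| ≤ 1) (hf' : ∀ y, |f' y| ≤ 1) (hB : ∀ n, |B n| ≤ M * waveNum n ^ j)
    {t : ℝ} (ht : 0 < t) (x : ℝ) :
    HasDerivAt (fun y => modeSeries f B y t)
      (modeSeries f' (fun n => waveNum n * B n) x t) x := by
  have hterm n y : HasDerivAt (fun y => B n * (f (waveNum n * y) * exp (-waveNum n ^ 2 * t)))
      (waveNum n * B n * (f' (waveNum n * y) * exp (-waveNum n ^ 2 * t))) y :=
    ((((hderiv _).comp y ((hasDerivAt_id' y).const_mul (waveNum n))).mul_const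
      (exp (-waveNum n ^ 2 * t))).const_mul (B n)).congr_deriv (by ring)
  have hsum : Summable fun n => M * waveNum n ^ (j + 1) * exp (-waveNum n ^ 2 * t) := by
    simpa only [mul_assoc] using (summable_waveNum_pow_mul_exp (j + 1) ht).mul_left M
  exact hasDerivAt_tsum hsum hterm (fun n y => abs_mul_mode_le hf' (abs_waveNum_mul_le hB) n y t)
    (summable_abs_modeSeries hf hB ht 0).of_abs x

end

noncomputable def heatCoeff (a b : ℝ) (n : ℕ) : ℝ :=
  (cos (waveNum n * a) - cos (waveNum n * b)) / (n + 1)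

lemma abs_heatCoeff_le (a b : ℝ) (n : ℕ) : |heatCoeff a b n| ≤ 2 := by
  have hn : (1 : ℝ) ≤ n + 1 := by simp
  rw [heatCoeff, abs_div, abs_of_pos (by positivity : (0 : ℝ) < n + 1),
    div_le_iff₀ (by positivity)]
  calc |cos (waveNum n * a) - cos (waveNum n * b)|
      ≤ |cos (waveNum n * a)| + |cos (waveNum n * b)| := abs_sub _ _
    _ ≤ 1 + 1 := add_le_add (abs_cos_le_one _) (abs_cos_le_one _)
    _ ≤ 2 * (n + 1) := by linarith

lemma heatTerm1D_succ (a b : ℝ) (n : ℕ) (x t : ℝ) :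
    heatTerm1D a b (n + 1) x t =
      heatCoeff a b n * (sin (waveNum n * x) * exp (-waveNum n ^ 2 * t)) := by
  simp only [heatTerm1D, heatCoeff, waveNum]
  push_cast
  ring_nf

lemma heatSol1D_eq_modeSeries (a b x t : ℝ) :
    heatSol1D a b x t = 2 / π * modeSeries sin (heatCoeff a b) x t := by
  simp only [heatSol1D, modeSeries, heatTerm1D_succ]

theorem heatSol1D_solves_heat_equation_general
    (a b : ℝ) :
    (∀ t : ℝ, 0 < t → ∀ x : ℝ, Summable (fun n : ℕ => |heatTerm1D a b (n + 1) x t|)) ∧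
    (∀ x ∈ Ioo (0:ℝ) 1, ∀ t : ℝ, 0 < t →
      deriv (fun s => heatSol1D a b x s) t
        - deriv (fun y => deriv (fun z => heatSol1D a b z t) y) x = 0) ∧
    (∀ t : ℝ, 0 < t → heatSol1D a b 0 t = 0 ∧ heatSol1D a b 1 t = 0) := by
  have hB n : |heatCoeff a b n| ≤ 2 * waveNum n ^ 0 := by simpa using abs_heatCoeff_le a b n
  simp only [heatSol1D_eq_modeSeries]
  refine ⟨fun t ht x => ?_, fun x _ t ht => ?_, fun t _ => ⟨?_, ?_⟩⟩
  · simpa only [heatTerm1D_succ] using summable_abs_modeSeries abs_sin_le_one hB ht x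
  · have hx y := (hasDerivAt_modeSeries_space hasDerivAt_sin abs_sin_le_one abs_cos_le_one hB ht
      y).const_mul (2 / π)
    have hxx := (hasDerivAt_modeSeries_space hasDerivAt_cos abs_cos_le_one
      (fun y => (abs_neg (sin y)).trans_le (abs_sin_le_one y))
      (abs_waveNum_mul_le hB) ht x).const_mul (2 / π)
    rw [(hasDerivAt_modeSeries_time abs_sin_le_one hB ht x).const_mul (2 / π) |>.deriv,
      funext fun y => (hx y).deriv, hxx.deriv, sub_eq_zero]
    congr 1
    exact tsum_congr fun n => by ring
  · simp [modeSeries]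
  · have hsin n : sin (waveNum n) = 0 := by
      simpa [waveNum] using sin_nat_mul_pi (n + 1)
    simp [modeSeries, hsin]

/-- For every `t > 0` the series converges absolutely for all `x`, and the resulting
function solves the 1D heat equation on `(0,1)` with homogeneous Dirichlet boundary
conditions at `x = 0` and `x = 1`. -/
theorem heatSol1D_solves_heat_equation
    (a b : ℝ) (ha : 0 ≤ a) (hab : a < b) (hb : b ≤ 1) :
    (∀ t : ℝ, 0 < t → ∀ x : ℝ, Summable (fun n : ℕ => |heatTerm1D a b (n + 1) x t|)) ∧
    (∀ x ∈ Ioo (0:ℝ) 1, ∀ t : ℝ, 0 < t →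
      deriv (fun s => heatSol1D a b x s) t
        - deriv (fun y => deriv (fun z => heatSol1D a b z t) y) x = 0) ∧
    (∀ t : ℝ, 0 < t → heatSol1D a b 0 t = 0 ∧ heatSol1D a b 1 t = 0) :=
  heatSol1D_solves_heat_equation_general a b
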